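/- For τ∈(0,π/2], define F̃_τ(μ₁,…,μₙ):=−F_τ(1/μ₁,…,1/μₙ) on Γ⁺_n. Then for each i, ∂F̃_τ/∂μᵢ = λᵢ²·∂F_τ/∂λᵢ where λᵢ=1/μᵢ, so ∂F̃_τ/∂μᵢ>0 on Γ⁺_n; the Hessian of F̃_τ is diagonal, with ∂²F̃_τ/∂μᵢ∂μⱼ equal to δᵢⱼ times −2√(a²+1)(μᵢ+a)/[(1+aμᵢ)²−(bμᵢ)²]² if 0<τ<π/4, −2√2/(1+μᵢ)³ if τ=π/4, −2√(a²+1)(μᵢ+a)/[(1+aμᵢ)²+(bμᵢ)²]² if π/4<τ<π/2, and −2μᵢ/(1+μᵢ²)² if τ=π/2; hence the Hessian (∂²F̃_τ/∂μᵢ∂μⱼ) is negative semidefinite on Γ⁺_n. -/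

import Mathlib

noncomputable section

open Real Set Filter Topology Matrix
open scoped Classical

namespace SBV

abbrev En (n : ℕ) := EuclideanSpace ℝ (Fin n)

/-- `i`-th partial derivative of `u` at `x`. -/
def pd {n : ℕ} (u : En n → ℝ) (i : Fin n) (x : En n) : ℝ :=
  fderiv ℝ u x (EuclideanSpace.single i 1)

/-- Gradient `Du` of `u` at `x`, as a point of Euclidean space. -/
def grad {n : ℕ} (u : En n → ℝ) (x : En n) : En n :=
  (WithLp.equiv 2 (Fin n → ℝ)).symm fun i => pd u i x

/-- Hessian matrix `D²u` of `u` at `x`. -/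
def Hess {n : ℕ} (u : En n → ℝ) (x : En n) : Matrix (Fin n) (Fin n) ℝ :=
  Matrix.of fun i j => pd (fun y => pd u j y) i x

/-- `lam` is a vector of eigenvalues of the symmetric matrix `A`. -/
def IsEigs {n : ℕ} (A : Matrix (Fin n) (Fin n) ℝ) (lam : Fin n → ℝ) : Prop :=
  ∃ P : Matrix (Fin n) (Fin n) ℝ, Pᵀ * P = 1 ∧ A = P * Matrix.diagonal lam * Pᵀ

/-- The positive cone `Γ⁺_n`. -/
def PosCone (n : ℕ) : Set (Fin n → ℝ) := {lam | ∀ i, 0 < lam i}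

/-- `i`-th partial derivative of a function of `n` real variables. -/
def pdF {n : ℕ} (F : (Fin n → ℝ) → ℝ) (i : Fin n) (lam : Fin n → ℝ) : ℝ :=
  fderiv ℝ F lam (Pi.single i 1)

/-- Second partial derivatives of a function of `n` real variables. -/
def pdF2 {n : ℕ} (F : (Fin n → ℝ) → ℝ) (i j : Fin n) (lam : Fin n → ℝ) : ℝ :=
  fderiv ℝ (pdF F j) lam (Pi.single i 1)

/-- `h` is a defining function of the uniformly convex domain `Ω` with convexity constant `θ`. -/
def IsDefiningFn {n : ℕ} (Ω : Set (En n)) (h : En n → ℝ) (θ : ℝ) : Prop :=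
  ContDiff ℝ (⊤ : ℕ∞) h ∧ Ω = {p | 0 < h p} ∧
  (∀ p ∈ frontier Ω, ‖grad h p‖ = 1) ∧
  (∀ p ∈ closure Ω, ∀ ξ : Fin n → ℝ,
    ∑ i, ∑ j, Hess h p i j * ξ i * ξ j ≤ -θ * ∑ i, ξ i ^ 2)

/-- Uniformly convex bounded domain with smooth boundary. -/
def UCDomain {n : ℕ} (Ω : Set (En n)) : Prop :=
  Ω.Nonempty ∧ IsOpen Ω ∧ Bornology.IsBounded Ω ∧ Convex ℝ Ω ∧
    ∃ h θ, 0 < θ ∧ IsDefiningFn Ω h θ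

/-- The operator `F_τ` of the Lagrangian mean curvature equation. -/
def Ftau {n : ℕ} (τ : ℝ) (lam : Fin n → ℝ) : ℝ :=
  if τ < π / 4 then
    Real.sqrt (Real.cot τ ^ 2 + 1) / (2 * Real.sqrt |Real.cot τ ^ 2 - 1|) *
      ∑ i, Real.log ((lam i + Real.cot τ - Real.sqrt |Real.cot τ ^ 2 - 1|) /
        (lam i + Real.cot τ + Real.sqrt |Real.cot τ ^ 2 - 1|))
  else if τ = π / 4 then -Real.sqrt 2 * ∑ i, (1 + lam i)⁻¹
  else if τ < π / 2 then
    Real.sqrt (Real.cot τ ^ 2 + 1) / Real.sqrt |Real.cot τ ^ 2 - 1| *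
      ∑ i, Real.arctan ((lam i + Real.cot τ - Real.sqrt |Real.cot τ ^ 2 - 1|) /
        (lam i + Real.cot τ + Real.sqrt |Real.cot τ ^ 2 - 1|))
  else ∑ i, Real.arctan (lam i)

/-- First derivative `∂F_τ/∂λᵢ` as a function of the single entry `l = λᵢ`. -/
def dFtau (τ l : ℝ) : ℝ :=
  if τ < π / 4 then
    Real.sqrt (Real.cot τ ^ 2 + 1) /
      ((l + Real.cot τ) ^ 2 - Real.sqrt |Real.cot τ ^ 2 - 1| ^ 2)
  else if τ = π / 4 then Real.sqrt 2 / (1 + l) ^ 2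
  else if τ < π / 2 then
    Real.sqrt (Real.cot τ ^ 2 + 1) /
      ((l + Real.cot τ) ^ 2 + Real.sqrt |Real.cot τ ^ 2 - 1| ^ 2)
  else 1 / (1 + l ^ 2)

/-- Diagonal second derivative `∂²F_τ/∂λᵢ²` as a function of `l = λᵢ`. -/
def d2Ftau (τ l : ℝ) : ℝ :=
  if τ < π / 4 then
    -2 * Real.sqrt (Real.cot τ ^ 2 + 1) * (l + Real.cot τ) /
      ((l + Real.cot τ) ^ 2 - Real.sqrt |Real.cot τ ^ 2 - 1| ^ 2) ^ 2
  else if τ = π / 4 then -2 * Real.sqrt 2 / (1 + l) ^ 3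
  else if τ < π / 2 then
    -2 * Real.sqrt (Real.cot τ ^ 2 + 1) * (l + Real.cot τ) /
      ((l + Real.cot τ) ^ 2 + Real.sqrt |Real.cot τ ^ 2 - 1| ^ 2) ^ 2
  else -2 * l / (1 + l ^ 2) ^ 2

/-- The value `F_τ(0,…,0)`. -/
def FtauZero (n : ℕ) (τ : ℝ) : ℝ :=
  if τ < π / 4 then
    n * Real.sqrt (Real.cot τ ^ 2 + 1) / (2 * Real.sqrt |Real.cot τ ^ 2 - 1|) *
      Real.log ((Real.cot τ - Real.sqrt |Real.cot τ ^ 2 - 1|) /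
        (Real.cot τ + Real.sqrt |Real.cot τ ^ 2 - 1|))
  else if τ = π / 4 then -Real.sqrt 2 * n
  else if τ < π / 2 then
    n * Real.sqrt (Real.cot τ ^ 2 + 1) / Real.sqrt |Real.cot τ ^ 2 - 1| *
      Real.arctan ((Real.cot τ - Real.sqrt |Real.cot τ ^ 2 - 1|) /
        (Real.cot τ + Real.sqrt |Real.cot τ ^ 2 - 1|))
  else 0

/-- The value `F_τ(+∞,…,+∞)`. -/
def FtauTop (n : ℕ) (τ : ℝ) : ℝ :=
  if τ ≤ π / 4 then 0
  else if τ < π / 2 then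
    n * π * Real.sqrt (Real.cot τ ^ 2 + 1) / (4 * Real.sqrt |Real.cot τ ^ 2 - 1|)
  else n * π / 2

/-- The dual operator `F̃_τ(μ) = -F_τ(1/μ)`. -/
def Ftaud {n : ℕ} (τ : ℝ) (mu : Fin n → ℝ) : ℝ := -Ftau τ fun i => (mu i)⁻¹

/-- Diagonal second derivative `∂²F̃_τ/∂μᵢ²` as a function of `m = μᵢ`. -/
def d2Ftaud (τ m : ℝ) : ℝ :=
  if τ < π / 4 then
    -2 * Real.sqrt (Real.cot τ ^ 2 + 1) * (m + Real.cot τ) /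
      ((1 + Real.cot τ * m) ^ 2 - (Real.sqrt |Real.cot τ ^ 2 - 1| * m) ^ 2) ^ 2
  else if τ = π / 4 then -2 * Real.sqrt 2 / (1 + m) ^ 3
  else if τ < π / 2 then
    -2 * Real.sqrt (Real.cot τ ^ 2 + 1) * (m + Real.cot τ) /
      ((1 + Real.cot τ * m) ^ 2 + (Real.sqrt |Real.cot τ ^ 2 - 1| * m) ^ 2) ^ 2
  else -2 * m / (1 + m ^ 2) ^ 2

/-- `u` solves the flow `∂u/∂t = F(λ(D²u)) - f` with second boundary condition
`Du(Ω) = Ω̃` and initial value `u₀`, for times in `I`. -/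
def SolvesFlow {n : ℕ} (F : (Fin n → ℝ) → ℝ) (f : En n → ℝ) (Ω Ωt : Set (En n))
    (u₀ : En n → ℝ) (u : ℝ → En n → ℝ) (I : Set ℝ) : Prop :=
  (∀ t ∈ I, ∀ x ∈ Ω, ∃ lam ∈ PosCone n,
      IsEigs (Hess (u t) x) lam ∧ HasDerivAt (fun s => u s x) (F lam - f x) t) ∧
  (∀ t ∈ I, grad (u t) '' Ω = Ωt) ∧
  ∀ x ∈ closure Ω, u 0 x = u₀ x

/-- `u` solves the flow with the boundary condition expressed through the defining
function `h` of the target domain: `h(Du) = 0` on `∂Ω`. -/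
def SolvesFlowBC {n : ℕ} (F : (Fin n → ℝ) → ℝ) (f h : En n → ℝ) (Ω : Set (En n))
    (u₀ : En n → ℝ) (u : ℝ → En n → ℝ) (T : ℝ) : Prop :=
  (∀ t ∈ Ioc 0 T, ∀ x ∈ Ω, ∃ lam ∈ PosCone n,
      IsEigs (Hess (u t) x) lam ∧ HasDerivAt (fun s => u s x) (F lam - f x) t) ∧
  (∀ t ∈ Ioc 0 T, ∀ x ∈ frontier Ω, h (grad (u t) x) = 0) ∧
  ∀ x ∈ closure Ω, u 0 x = u₀ x

/-- `ut` solves the dual (Legendre-transformed) flow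
`∂ũ/∂t = F̃(λ(D²ũ)) + f(Dũ)` on `Ω̃`, with `h̃(Dũ) = 0` on `∂Ω̃`. -/
def SolvesDualFlow {n : ℕ} (Ft : (Fin n → ℝ) → ℝ) (f ht : En n → ℝ) (Ωt : Set (En n))
    (ut₀ : En n → ℝ) (ut : ℝ → En n → ℝ) (T : ℝ) : Prop :=
  (∀ t ∈ Ioc 0 T, ∀ y ∈ Ωt, ∃ mu ∈ PosCone n,
      IsEigs (Hess (ut t) y) mu ∧
      HasDerivAt (fun s => ut s y) (Ft mu + f (grad (ut t) y)) t) ∧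
  (∀ t ∈ Ioc 0 T, ∀ y ∈ frontier Ωt, ht (grad (ut t) y) = 0) ∧
  ∀ y ∈ closure Ωt, ut 0 y = ut₀ y

/-- The solution is strictly convex in the space variable for times in `I`. -/
def StrictlyConvexSol {n : ℕ} (Ω : Set (En n)) (u : ℝ → En n → ℝ) (I : Set ℝ) : Prop :=
  ∀ t ∈ I, ∀ x ∈ Ω, (Hess (u t) x).PosDef

/-- Structure conditions (i)-(v) of the paper for the operator `F`, with limit values
`F0 = F(0,…,0)` and `Finf = F(+∞,…,+∞)`. -/
def StructCond {n : ℕ} (F : (Fin n → ℝ) → ℝ) (F0 Finf : ℝ) : Prop :=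
  (∀ lam ∈ PosCone n, ∀ σ : Equiv.Perm (Fin n), F (lam ∘ σ) = F lam) ∧
  ContDiffOn ℝ 2 F (PosCone n) ∧
  Tendsto (fun l : ℝ => F fun _ => l) (𝓝[>] 0) (𝓝 F0) ∧
  Tendsto (fun l : ℝ => F fun _ => l) atTop (𝓝 Finf) ∧
  F0 < Finf ∧
  (∀ lam ∈ PosCone n, ∀ i, 0 < pdF F i lam) ∧
  (∀ lam ∈ PosCone n, ∀ ξ : Fin n → ℝ,
      ∑ i, ∑ j, pdF2 F i j lam * ξ i * ξ j ≤ 0) ∧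
  (∀ mu ∈ PosCone n, ∀ ξ : Fin n → ℝ,
      ∑ i, ∑ j, pdF2 (fun m => -F fun k => (m k)⁻¹) i j mu * ξ i * ξ j ≤ 0) ∧
  (∀ s₁ s₂ : ℝ, 0 < s₁ → 0 < s₂ → ∃ L₁ L₂ : ℝ, 0 < L₁ ∧ 0 < L₂ ∧
      ∀ lam ∈ PosCone n, (∃ i, lam i ≤ s₁) → (∃ i, s₂ ≤ lam i) →
        L₁ ≤ ∑ i, pdF F i lam ∧ (∑ i, pdF F i lam) ≤ L₂ ∧
        L₁ ≤ ∑ i, pdF F i lam * lam i ^ 2 ∧ (∑ i, pdF F i lam * lam i ^ 2) ≤ L₂)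

/-- Membership in the class `𝒜_δ`: concave, `C²`, and oscillation at most `δ`. -/
def InA {n : ℕ} (Ω : Set (En n)) (δ : ℝ) (f : En n → ℝ) : Prop :=
  ContDiffOn ℝ 2 f (closure Ω) ∧ ConcaveOn ℝ (closure Ω) f ∧
  ∀ x ∈ closure Ω, ∀ y ∈ closure Ω, |f x - f y| ≤ δ

/-- Admissibility of `δ` relative to the initial datum:
`δ < min{Finf - max F(λ(D²u₀)), min F(λ(D²u₀)) - F0}`. -/
def DeltaAdm {n : ℕ} (Ω : Set (En n)) (F : (Fin n → ℝ) → ℝ) (F0 Finf : ℝ)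
    (u₀ : En n → ℝ) (δ : ℝ) : Prop :=
  0 < δ ∧ ∃ g₀ : En n → ℝ,
    (∀ x ∈ closure Ω, ∃ lam ∈ PosCone n, IsEigs (Hess u₀ x) lam ∧ g₀ x = F lam) ∧
    δ < Finf - sSup (g₀ '' closure Ω) ∧ δ < sInf (g₀ '' closure Ω) - F0

/-- The initial datum is uniformly convex with `Du₀(Ω) = Ω̃`. -/
def GoodInit {n : ℕ} (Ω Ωt : Set (En n)) (u₀ : En n → ℝ) : Prop :=
  ContDiffOn ℝ 2 u₀ (closure Ω) ∧ (∀ x ∈ closure Ω, (Hess u₀ x).PosDef) ∧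
  grad u₀ '' Ω = Ωt

/-- Two-sided bounds `Λ₁ ≤ Σᵢ ∂F/∂λᵢ ≤ Λ₂` and `Λ₁ ≤ Σᵢ (∂F/∂λᵢ)λᵢ² ≤ Λ₂`
along the flow. -/
def FlowBounds {n : ℕ} (F : (Fin n → ℝ) → ℝ) (Ω : Set (En n)) (u : ℝ → En n → ℝ)
    (T Λ₁ Λ₂ : ℝ) : Prop :=
  ∀ t ∈ Ioc 0 T, ∀ x ∈ Ω, ∀ lam ∈ PosCone n, IsEigs (Hess (u t) x) lam →
    Λ₁ ≤ ∑ i, pdF F i lam ∧ (∑ i, pdF F i lam) ≤ Λ₂ ∧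
    Λ₁ ≤ ∑ i, pdF F i lam * lam i ^ 2 ∧ (∑ i, pdF F i lam * lam i ^ 2) ≤ Λ₂

/-- Supremum of a real-valued function on a set. -/
def supO {α : Type*} (s : Set α) (g : α → ℝ) : ℝ := sSup (g '' s)

/-- Hölder seminorm `[v]_γ` on a set `s`. -/
def hSemi {E F : Type*} [NormedAddCommGroup E] [NormedAddCommGroup F]
    (γ : ℝ) (s : Set E) (v : E → F) : ℝ :=
  sSup {C | ∃ x ∈ s, ∃ y ∈ s, x ≠ y ∧ C = ‖v x - v y‖ / ‖x - y‖ ^ γ}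

/-- The `C^{k+γ}` norm on a set `s`. -/
def cNormK {n : ℕ} (k : ℕ) (γ : ℝ) (s : Set (En n)) (w : En n → ℝ) : ℝ :=
  (∑ j ∈ Finset.range (k + 1), supO s fun x => ‖iteratedFDeriv ℝ j w x‖) +
    hSemi γ s (iteratedFDeriv ℝ k w)

/-- Parabolic Hölder seminorm `[v]_{γ,γ/2}` on a space-time set `Q`. -/
def pSemi {n : ℕ} {F : Type*} [NormedAddCommGroup F] (γ : ℝ) (Q : Set (En n × ℝ))
    (v : En n × ℝ → F) : ℝ :=
  sSup {C | ∃ p ∈ Q, ∃ q ∈ Q, p ≠ q ∧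
    C = ‖v p - v q‖ / (‖p.1 - q.1‖ ^ γ + |p.2 - q.2| ^ (γ / 2))}

/-- Parabolic Hölder norm `‖v‖_{C^{γ,γ/2}(Q)}`. -/
def pNormC {n : ℕ} {F : Type*} [NormedAddCommGroup F] (γ : ℝ) (Q : Set (En n × ℝ))
    (v : En n × ℝ → F) : ℝ :=
  supO Q (fun p => ‖v p‖) + pSemi γ Q v

/-- Membership in the parabolic class `C^{2+γ,(2+γ)/2}(Q)`. -/
def InParaC2 {n : ℕ} (γ : ℝ) (Q : Set (En n × ℝ)) (u : ℝ → En n → ℝ) : Prop :=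
  ContinuousOn (fun p : En n × ℝ => u p.2 p.1) Q ∧
  ∃ K : ℝ,
    (∀ p ∈ Q, ∀ q ∈ Q,
      ‖iteratedFDeriv ℝ 2 (u p.2) p.1 - iteratedFDeriv ℝ 2 (u q.2) q.1‖ ≤
        K * (‖p.1 - q.1‖ ^ γ + |p.2 - q.2| ^ (γ / 2))) ∧
    (∀ p ∈ Q, ∀ q ∈ Q,
      |deriv (fun s => u s p.1) p.2 - deriv (fun s => u s q.1) q.2| ≤
        K * (‖p.1 - q.1‖ ^ γ + |p.2 - q.2| ^ (γ / 2)))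

/-! With `a = cot τ` and `b = √|a² - 1|`, each branch of `F_τ` is a sum `∑ᵢ φ(λᵢ)`, and the
relation `b² = ±(a² - 1)` turns `φ'` in all four regimes into the single formula
`φ'(l) = √(a² + 1) / (l² + 2al + 1)`. Since `l² + 2al + 1` is palindromic,
`F̃_τ(μ) = ∑ᵢ -φ(1/μᵢ)` is separable with the same derivative
`m⁻² φ'(1/m) = √(a² + 1) / (m² + 2am + 1)`. Hence the Hessian of `F̃_τ` is diagonal with entries
`-2√(a² + 1)(m + a) / (m² + 2am + 1)²`, which are `≤ 0` because `a ≥ 0` on `(0, π/2]`. -/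

lemma isOpen_posCone (n : ℕ) : IsOpen (PosCone n) := by
  have : PosCone n = Set.univ.pi fun _ => Ioi 0 := by
    ext y
    simp [PosCone]
  rw [this]
  exact isOpen_set_pi Set.finite_univ fun _ _ => isOpen_Ioi

lemma sum_sum_ite_mul_mul {n : ℕ} (d ξ : Fin n → ℝ) :
    ∑ i, ∑ j, (if i = j then d i else 0) * ξ i * ξ j = ∑ i, d i * ξ i ^ 2 := by
  refine Finset.sum_congr rfl fun i _ => ?_
  simp only [ite_mul, zero_mul, Finset.sum_ite_eq, Finset.mem_univ, if_true]
  ring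

section Separable

variable {n : ℕ} {x : Fin n → ℝ}

lemma pdF_comp_apply {g : ℝ → ℝ} {g' : ℝ} {j : Fin n} (hg : HasDerivAt g g' (x j))
    (i : Fin n) : pdF (fun y => g (y j)) i x = if i = j then g' else 0 := by
  have h : HasFDerivAt (fun y : Fin n → ℝ => g (y j))
      ((ContinuousLinearMap.toSpanSingleton ℝ g').comp (ContinuousLinearMap.proj j)) x :=
    hg.hasFDerivAt.comp x (hasFDerivAt_apply j x)
  rw [pdF, h.fderiv]
  simp [Pi.single_apply, eq_comm]

lemma pdF_sum_comp_apply {g g' : ℝ → ℝ} (hg : ∀ j, HasDerivAt g (g' (x j)) (x j)) (i : Fin n) :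
    pdF (fun y => ∑ j, g (y j)) i x = g' (x i) := by
  have hd : ∀ j ∈ Finset.univ, DifferentiableAt ℝ (fun y : Fin n → ℝ => g (y j)) x :=
    fun j _ => (hg j).differentiableAt.comp x (differentiableAt_apply j x)
  rw [pdF, fderiv_fun_sum hd, _root_.sum_apply]
  calc ∑ j, pdF (fun y => g (y j)) i x = ∑ j, if i = j then g' (x j) else 0 :=
        Finset.sum_congr rfl fun j _ => pdF_comp_apply (hg j) i
    _ = g' (x i) := by simp

variable {G : (Fin n → ℝ) → ℝ} {ψ ψ' ψ'' : ℝ → ℝ}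

lemma pdF_of_separable (hG : ∀ y, G y = ∑ j, ψ (y j))
    (hψ : ∀ l > 0, HasDerivAt ψ (ψ' l) l) (hx : x ∈ PosCone n) (i : Fin n) :
    pdF G i x = ψ' (x i) := by
  rw [show G = fun y => ∑ j, ψ (y j) from funext hG]
  exact pdF_sum_comp_apply (fun j => hψ _ (hx j)) i

lemma pdF2_of_separable (hG : ∀ y, G y = ∑ j, ψ (y j))
    (hψ : ∀ l > 0, HasDerivAt ψ (ψ' l) l) (hψ' : ∀ l > 0, HasDerivAt ψ' (ψ'' l) l)
    (hx : x ∈ PosCone n) (i j : Fin n) :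
    pdF2 G i j x = if i = j then ψ'' (x i) else 0 := by
  have hpd : pdF G j =ᶠ[𝓝 x] fun y => ψ' (y j) :=
    Filter.eventually_of_mem ((isOpen_posCone n).mem_nhds hx) fun y hy =>
      pdF_of_separable hG hψ hy j
  rw [pdF2, hpd.fderiv_eq]
  exact pdF_comp_apply (hψ' _ (hx j)) i |>.trans (by split_ifs with h <;> simp [h])

end Separable

section Profile

variable {a b c l m : ℝ}

lemma hasDerivAt_log_div_add_sub (hsub : l + a - b ≠ 0) (hadd : l + a + b ≠ 0) :
    HasDerivAt (fun l => Real.log ((l + a - b) / (l + a + b)))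
      (2 * b / ((l + a) ^ 2 - b ^ 2)) l := by
  have hu : HasDerivAt (fun l => (l + a - b) / (l + a + b))
      ((1 * (l + a + b) - (l + a - b) * 1) / (l + a + b) ^ 2) l :=
    (((hasDerivAt_id l).add_const a).sub_const b).div
      (((hasDerivAt_id l).add_const a).add_const b) hadd
  convert hu.log (div_ne_zero hsub hadd) using 1
  have : (l + a) ^ 2 - b ^ 2 ≠ 0 := by
    rw [show (l + a) ^ 2 - b ^ 2 = (l + a - b) * (l + a + b) by ring]
    exact mul_ne_zero hsub hadd
  field_simp
  ring

lemma hasDerivAt_arctan_div_add_sub (hadd : l + a + b ≠ 0) :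
    HasDerivAt (fun l => Real.arctan ((l + a - b) / (l + a + b)))
      (b / ((l + a) ^ 2 + b ^ 2)) l := by
  have hu : HasDerivAt (fun l => (l + a - b) / (l + a + b))
      ((1 * (l + a + b) - (l + a - b) * 1) / (l + a + b) ^ 2) l :=
    (((hasDerivAt_id l).add_const a).sub_const b).div
      (((hasDerivAt_id l).add_const a).add_const b) hadd
  convert hu.arctan using 1
  have : 0 < (l + a) ^ 2 + b ^ 2 := by
    nlinarith [sq_pos_of_ne_zero hadd, sq_nonneg (l + a - b)]
  field_simp
  ring

lemma hasDerivAt_log_profile (ha : 1 < a) (hb : b ^ 2 = a ^ 2 - 1) (hb0 : 0 < b) (hl : 0 < l) :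
    HasDerivAt (fun l => √(a ^ 2 + 1) / (2 * b) * Real.log ((l + a - b) / (l + a + b)))
      (√(a ^ 2 + 1) / (l ^ 2 + 2 * a * l + 1)) l := by
  have hba : b < a := by nlinarith
  refine ((hasDerivAt_log_div_add_sub (a := a) (b := b) (l := l) (by linarith)
    (by linarith)).const_mul (√(a ^ 2 + 1) / (2 * b))).congr_deriv ?_
  rw [show (l + a) ^ 2 - b ^ 2 = l ^ 2 + 2 * a * l + 1 by linear_combination -hb]
  field_simp

lemma hasDerivAt_arctan_profile (ha : 0 ≤ a) (hb : b ^ 2 = 1 - a ^ 2) (hb0 : 0 < b)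
    (hl : 0 < l) :
    HasDerivAt (fun l => √(a ^ 2 + 1) / b * Real.arctan ((l + a - b) / (l + a + b)))
      (√(a ^ 2 + 1) / (l ^ 2 + 2 * a * l + 1)) l := by
  refine ((hasDerivAt_arctan_div_add_sub (a := a) (b := b) (l := l)
    (by linarith)).const_mul (√(a ^ 2 + 1) / b)).congr_deriv ?_
  rw [show (l + a) ^ 2 + b ^ 2 = l ^ 2 + 2 * a * l + 1 by linear_combination hb]
  field_simp

lemma quad_pos (ha : 0 ≤ a) (hm : 0 < m) : 0 < m ^ 2 + 2 * a * m + 1 := by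
  positivity

lemma hasDerivAt_div_quad (hq : m ^ 2 + 2 * a * m + 1 ≠ 0) :
    HasDerivAt (fun m => c / (m ^ 2 + 2 * a * m + 1))
      (-2 * c * (m + a) / (m ^ 2 + 2 * a * m + 1) ^ 2) m := by
  have hd : HasDerivAt (fun m => m ^ 2 + 2 * a * m + 1) (2 * m + 2 * a) m := by
    simpa using ((hasDerivAt_pow 2 m).add ((hasDerivAt_id m).const_mul (2 * a))).add_const 1
  refine ((hasDerivAt_const m c).div hd hq).congr_deriv ?_
  ring

lemma inv_sq_mul_div_quad (hm : m ≠ 0) :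
    (m⁻¹) ^ 2 * (c / ((m⁻¹) ^ 2 + 2 * a * m⁻¹ + 1)) = c / (m ^ 2 + 2 * a * m + 1) := by
  field_simp
  ring

lemma hasDerivAt_neg_comp_inv {φ : ℝ → ℝ}
    (hφ : ∀ l > 0, HasDerivAt φ (c / (l ^ 2 + 2 * a * l + 1)) l) (hm : 0 < m) :
    HasDerivAt (fun m => -φ m⁻¹) (c / (m ^ 2 + 2 * a * m + 1)) m := by
  refine ((hφ _ (inv_pos.2 hm)).comp m (hasDerivAt_inv hm.ne')).neg.congr_deriv ?_
  rw [← inv_sq_mul_div_quad hm.ne']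
  ring

end Profile

section Cot

variable {τ : ℝ}

lemma one_lt_cot (h0 : 0 < τ) (h : τ < π / 4) : 1 < cot τ := by
  have htan : tan τ < 1 := by
    rw [← tan_pi_div_four]
    exact tan_lt_tan_of_lt_of_lt_pi_div_two (by linarith [pi_pos]) (by linarith [pi_pos]) h
  rw [← tan_inv_eq_cot]
  exact (one_lt_inv₀ (tan_pos_of_pos_of_lt_pi_div_two h0 (by linarith [pi_pos]))).2 htan

lemma cot_lt_one (h0 : π / 4 < τ) (h : τ < π / 2) : cot τ < 1 := by
  have htan : 1 < tan τ := by
    rw [← tan_pi_div_four]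
    exact tan_lt_tan_of_lt_of_lt_pi_div_two (by linarith [pi_pos]) h h0
  rw [← tan_inv_eq_cot]
  exact inv_lt_one_of_one_lt₀ htan

lemma cot_nonneg (h0 : 0 < τ) (h : τ ≤ π / 2) : 0 ≤ cot τ := by
  rw [cot_eq_cos_div_sin]
  exact div_nonneg (cos_nonneg_of_mem_Icc ⟨by linarith, h⟩)
    (sin_pos_of_pos_of_lt_pi h0 (by linarith [pi_pos])).le

lemma cot_pi_div_four : cot (π / 4) = 1 := by
  rw [← tan_inv_eq_cot, tan_pi_div_four, inv_one]

lemma cot_pi_div_two : cot (π / 2) = 0 := by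
  rw [cot_eq_cos_div_sin, cos_pi_div_two, zero_div]

lemma sq_sqrt_abs_cot_sq_sub_one_of_lt (h0 : 0 < τ) (h : τ < π / 4) :
    √|cot τ ^ 2 - 1| ^ 2 = cot τ ^ 2 - 1 := by
  have := one_lt_cot h0 h
  rw [sq_sqrt (abs_nonneg _), abs_of_pos (by nlinarith)]

lemma sq_sqrt_abs_cot_sq_sub_one_of_gt (h0 : π / 4 < τ) (h : τ < π / 2) :
    √|cot τ ^ 2 - 1| ^ 2 = 1 - cot τ ^ 2 := by
  have := cot_lt_one h0 h
  have := cot_nonneg (by linarith [pi_pos]) h.le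
  rw [sq_sqrt (abs_nonneg _), abs_of_neg (by nlinarith), neg_sub]

end Cot

section FtauTerm

def ftauTerm (τ l : ℝ) : ℝ :=
  if τ < π / 4 then
    √(cot τ ^ 2 + 1) / (2 * √|cot τ ^ 2 - 1|) *
      Real.log ((l + cot τ - √|cot τ ^ 2 - 1|) / (l + cot τ + √|cot τ ^ 2 - 1|))
  else if τ = π / 4 then -√2 * (1 + l)⁻¹
  else if τ < π / 2 then
    √(cot τ ^ 2 + 1) / √|cot τ ^ 2 - 1| *
      Real.arctan ((l + cot τ - √|cot τ ^ 2 - 1|) / (l + cot τ + √|cot τ ^ 2 - 1|))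
  else Real.arctan l

lemma Ftau_eq_sum_ftauTerm {n : ℕ} (τ : ℝ) (y : Fin n → ℝ) :
    Ftau τ y = ∑ j, ftauTerm τ (y j) := by
  unfold Ftau ftauTerm
  split_ifs <;> simp only [Finset.mul_sum]

lemma Ftaud_eq_sum_ftauTerm {n : ℕ} (τ : ℝ) (y : Fin n → ℝ) :
    Ftaud τ y = ∑ j, -ftauTerm τ (y j)⁻¹ := by
  rw [Ftaud, Ftau_eq_sum_ftauTerm, Finset.sum_neg_distrib]

variable {τ : ℝ}

lemma hasDerivAt_ftauTerm (hτ : τ ∈ Ioc 0 (π / 2)) {l : ℝ} (hl : 0 < l) :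
    HasDerivAt (ftauTerm τ) (√(cot τ ^ 2 + 1) / (l ^ 2 + 2 * cot τ * l + 1)) l := by
  obtain ⟨h0, h2⟩ := hτ
  rcases lt_trichotomy τ (π / 4) with h1 | rfl | h1
  · have hb := sq_sqrt_abs_cot_sq_sub_one_of_lt h0 h1
    have ha := one_lt_cot h0 h1
    rw [show ftauTerm τ = _ from funext fun l => if_pos h1]
    exact hasDerivAt_log_profile ha hb (sqrt_pos.2 (abs_pos.2 (by nlinarith))) hl
  · have hne : ¬ π / 4 < π / 4 := lt_irrefl _
    rw [show ftauTerm (π / 4) = _ from funext fun l => (if_neg hne).trans (if_pos rfl),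
      cot_pi_div_four]
    have hl1 : 1 + id l ≠ 0 := by simp only [id]; linarith
    refine (((hasDerivAt_id l).const_add 1).inv hl1).const_mul (-√2) |>.congr_deriv ?_
    norm_num
    field_simp
    ring
  · have hlt : ¬ τ < π / 4 := h1.not_gt
    rcases h2.lt_or_eq with h2 | rfl
    · have hb := sq_sqrt_abs_cot_sq_sub_one_of_gt h1 h2
      have ha0 := cot_nonneg h0 h2.le
      have ha1 := cot_lt_one h1 h2
      rw [show ftauTerm τ = _ from funext fun l =>
        (if_neg hlt).trans ((if_neg h1.ne').trans (if_pos h2))]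
      exact hasDerivAt_arctan_profile ha0 hb (sqrt_pos.2 (abs_pos.2 (by nlinarith))) hl
    · rw [show ftauTerm (π / 2) = Real.arctan from funext fun l =>
        (if_neg hlt).trans ((if_neg h1.ne').trans (if_neg (lt_irrefl _))), cot_pi_div_two]
      refine (hasDerivAt_arctan l).congr_deriv ?_
      norm_num
      ring

lemma d2Ftaud_eq (hτ : τ ∈ Ioc 0 (π / 2)) {m : ℝ} (hm : 0 < m) :
    d2Ftaud τ m = -2 * √(cot τ ^ 2 + 1) * (m + cot τ) / (m ^ 2 + 2 * cot τ * m + 1) ^ 2 := by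
  obtain ⟨h0, h2⟩ := hτ
  rcases lt_trichotomy τ (π / 4) with h1 | rfl | h1
  · rw [d2Ftaud, if_pos h1, mul_pow, sq_sqrt_abs_cot_sq_sub_one_of_lt h0 h1]
    ring
  · rw [d2Ftaud, if_neg (lt_irrefl _), if_pos rfl, cot_pi_div_four]
    have hm1 : 1 + m ≠ 0 := by linarith
    norm_num
    field_simp
    ring
  · have hlt : ¬ τ < π / 4 := h1.not_gt
    rcases h2.lt_or_eq with h2 | rfl
    · rw [d2Ftaud, if_neg hlt, if_neg h1.ne', if_pos h2, mul_pow,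
        sq_sqrt_abs_cot_sq_sub_one_of_gt h1 h2]
      ring
    · rw [d2Ftaud, if_neg hlt, if_neg h1.ne', if_neg (lt_irrefl _), cot_pi_div_two]
      norm_num
      ring

lemma d2Ftaud_nonpos (hτ : τ ∈ Ioc 0 (π / 2)) {m : ℝ} (hm : 0 < m) : d2Ftaud τ m ≤ 0 := by
  have ha := cot_nonneg hτ.1 hτ.2
  rw [d2Ftaud_eq hτ hm, neg_mul, neg_mul, neg_div]
  exact neg_nonpos.2 (by positivity)

end FtauTerm

/-- For the dual operator `F̃_τ(μ) = -F_τ(1/μ)` one has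
`∂F̃_τ/∂μᵢ = λᵢ² ∂F_τ/∂λᵢ > 0` with `λᵢ = 1/μᵢ`, the Hessian of `F̃_τ` is diagonal
with entries `d2Ftaud τ (μᵢ)`, and it is negative semidefinite on `Γ⁺_n`. -/
theorem stmt_5 (n : ℕ) (τ : ℝ) (hτ : τ ∈ Ioc 0 (π / 2))
    (mu : Fin n → ℝ) (hmu : mu ∈ PosCone n) :
    (∀ i, pdF (Ftaud τ) i mu =
      ((mu i)⁻¹) ^ 2 * pdF (Ftau τ) i fun j => (mu j)⁻¹) ∧
    (∀ i, 0 < pdF (Ftaud τ) i mu) ∧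
    (∀ i j, pdF2 (Ftaud τ) i j mu = if i = j then d2Ftaud τ (mu i) else 0) ∧
    (∀ ξ : Fin n → ℝ, ∑ i, ∑ j, pdF2 (Ftaud τ) i j mu * ξ i * ξ j ≤ 0) := by
  have ha := cot_nonneg hτ.1 hτ.2
  have hφ : ∀ l > 0, HasDerivAt (ftauTerm τ)
      (√(cot τ ^ 2 + 1) / (l ^ 2 + 2 * cot τ * l + 1)) l := fun l hl => hasDerivAt_ftauTerm hτ hl
  have hψ : ∀ m > 0, HasDerivAt (fun m => -ftauTerm τ m⁻¹)
      (√(cot τ ^ 2 + 1) / (m ^ 2 + 2 * cot τ * m + 1)) m := fun m hm =>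
    hasDerivAt_neg_comp_inv hφ hm
  have hψ' : ∀ m > 0, HasDerivAt (fun m => √(cot τ ^ 2 + 1) / (m ^ 2 + 2 * cot τ * m + 1))
      (d2Ftaud τ m) m := fun m hm =>
    d2Ftaud_eq hτ hm ▸ hasDerivAt_div_quad (quad_pos ha hm).ne'
  have hpd := pdF_of_separable (Ftaud_eq_sum_ftauTerm τ) hψ hmu
  have hpd2 := pdF2_of_separable (Ftaud_eq_sum_ftauTerm τ) hψ hψ' hmu
  refine ⟨fun i => ?_, fun i => ?_, hpd2, fun ξ => ?_⟩
  · rw [hpd, pdF_of_separable (Ftau_eq_sum_ftauTerm τ) hφ (fun j => inv_pos.2 (hmu j)),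
      inv_sq_mul_div_quad (hmu i).ne']
  · rw [hpd]
    exact div_pos (by positivity) (quad_pos ha (hmu i))
  · simp_rw [hpd2, sum_sum_ite_mul_mul]
    exact Finset.sum_nonpos fun i _ =>
      mul_nonpos_of_nonpos_of_nonneg (d2Ftaud_nonpos hτ (hmu i)) (sq_nonneg _)

end SBV
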